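/- The polynomial z^4 + z^3 + w z^2 + (-w^3 - 3w^2 - 3w - 2) z + w(w^2 + 3w + 2) is peculiar whenever w is a complex root of w^3 + 2w^2 + w + 1 = 0. That is, its multiset of roots equals {1, w, -w^3 - 3w^2 - 3w - 2, w(w^2 + 3w + 2)}. -/
import Mathlib

open Polynomial

/-- For each complex root `w` of `w^3 + 2w^2 + w + 1 = 0`, the quartic
`z^4 + z^3 + w z^2 + (-w^3 - 3w^2 - 3w - 2) z + w(w^2 + 3w + 2)` is peculiar:
its multiset of roots equals the multiset of its coefficients. -/
theorem stmt14 (w : ℂ) (hw : w ^ 3 + 2 * w ^ 2 + w + 1 = 0) :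
    (X ^ 4 + X ^ 3 + C w * X ^ 2 + C (-w ^ 3 - 3 * w ^ 2 - 3 * w - 2) * X
        + C (w * (w ^ 2 + 3 * w + 2)) : Polynomial ℂ).roots =
      {1, w, -w ^ 3 - 3 * w ^ 2 - 3 * w - 2, w * (w ^ 2 + 3 * w + 2)} := by
  have hC : (C w) ^ 3 + 2 * (C w) ^ 2 + C w + 1 = (0 : Polynomial ℂ) := by
    have := congrArg C hw
    push_cast [map_add, map_mul, map_pow, map_ofNat, map_one, map_zero] at this
    simpa using this
  have hp : (X ^ 4 + X ^ 3 + C w * X ^ 2 + C (-w ^ 3 - 3 * w ^ 2 - 3 * w - 2) * X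
        + C (w * (w ^ 2 + 3 * w + 2)) : Polynomial ℂ) =
      (({1, w, -w ^ 3 - 3 * w ^ 2 - 3 * w - 2, w * (w ^ 2 + 3 * w + 2)} : Multiset ℂ).map
        (fun a => X - C a)).prod := by
    simp only [Multiset.insert_eq_cons, Multiset.map_cons, Multiset.map_singleton,
      Multiset.prod_cons, Multiset.prod_singleton, map_sub, map_mul, map_add, map_pow,
      map_neg, map_ofNat, map_one]
    linear_combination (-2 * X + 2 * X ^ 2 + C w * (2 - 7 * X + 5 * X ^ 2)
      + (C w) ^ 2 * (5 - 9 * X + 4 * X ^ 2) + (C w) ^ 3 * (4 - 5 * X + X ^ 2)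
      + (C w) ^ 4 * (1 - X)) * hC
  rw [hp, Polynomial.roots_multiset_prod_X_sub_C]
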